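/- Let V = ⊕_{m ∈ Z^n} V_m be a Z^n-graded module over the commutative algebra A_n = C[t_1^{±1},...,t_n^{±1}] (with t^p V_m ⊆ V_{m+p}) that is irreducible as a graded module and uniformly bounded (there is N with dim V_m ≤ N for all m). Then dim V_m ≤ 1 for all m ∈ Z^n. -/

import Mathlib

/-!
A nonzero homogeneous vector `v ∈ V_{m₀}` spans a graded submodule, so by irreducibility
`A_n v = V`. Hence `V` is spanned over `ℂ` by the homogeneous vectors `t^p v ∈ V_{m₀ + p}`, and
since the grading is a direct sum, `V_m` is the line spanned by `t^(m - m₀) v`.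
-/

open AddMonoidAlgebra

theorem DirectSum.IsInternal.exists_ne_bot {R ι M : Type*} [DecidableEq ι] [Semiring R]
    [AddCommMonoid M] [Module R M] [Nontrivial M] {Vm : ι → Submodule R M}
    (hdecomp : DirectSum.IsInternal Vm) :
    ∃ m, Vm m ≠ ⊥ := by
  by_contra! h
  exact bot_ne_top ((iSup_eq_bot.2 h).symm.trans hdecomp.submodule_iSup_eq_top)

section GradedModule

variable {k G V : Type*}

theorem restrictScalars_span_singleton_eq_span_range [CommSemiring k] [AddMonoid G]
    [AddCommMonoid V] [Module k V] [Module k[G] V] [IsScalarTower k k[G] V] (v : V) :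
    (Submodule.span k[G] {v}).restrictScalars k =
      Submodule.span k (Set.range fun g : G => single g (1 : k) • v) := by
  refine le_antisymm ?_ (Submodule.span_le.2 ?_)
  · intro x hx
    obtain ⟨a, rfl⟩ := Submodule.mem_span_singleton.1 hx
    clear hx
    induction a using AddMonoidAlgebra.induction with
    | zero => simp
    | single_add g b f _ _ ih =>
      rw [add_smul, ← mul_one b, ← smul_eq_mul, ← smul_single, smul_assoc]
      exact add_mem (Submodule.smul_mem _ b (Submodule.subset_span ⟨g, rfl⟩)) ih
  · rintro _ ⟨g, rfl⟩
    exact Submodule.smul_mem _ _ (Submodule.mem_span_singleton_self v)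

variable [CommRing k] [AddGroup G] [AddCommGroup V] [Module k V] [Module k[G] V]
  [IsScalarTower k k[G] V] {Vm : G → Submodule k V}

theorem restrictScalars_span_singleton_eq_iSup_inf
    (haction : ∀ g m : G, ∀ v ∈ Vm m, single g (1 : k) • v ∈ Vm (m + g))
    {v : V} {m₀ : G} (hv : v ∈ Vm m₀) :
    (Submodule.span k[G] {v}).restrictScalars k =
      ⨆ m, (Submodule.span k[G] {v}).restrictScalars k ⊓ Vm m := by
  refine le_antisymm ?_ (iSup_le fun m => inf_le_left)
  conv_lhs => rw [restrictScalars_span_singleton_eq_span_range]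
  refine Submodule.span_le.2 ?_
  rintro _ ⟨g, rfl⟩
  exact Submodule.mem_iSup_of_mem (m₀ + g)
    ⟨Submodule.smul_mem _ _ (Submodule.mem_span_singleton_self v), haction g m₀ v hv⟩

theorem le_span_single_smul_of_span_eq_top [DecidableEq G] (hdecomp : DirectSum.IsInternal Vm)
    (haction : ∀ g m : G, ∀ v ∈ Vm m, single g (1 : k) • v ∈ Vm (m + g))
    {v : V} {m₀ : G} (hv : v ∈ Vm m₀) (hspan : Submodule.span k[G] {v} = ⊤) (m : G) :
    Vm m ≤ k ∙ single (-m₀ + m) (1 : k) • v := by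
  set S := k ∙ single (-m₀ + m) (1 : k) • v
  set X := ⨆ (j) (_ : j ≠ m), Vm j
  have hS : S ≤ Vm m := by
    rw [Submodule.span_singleton_le_iff_mem]
    simpa using haction (-m₀ + m) m₀ v hv
  have hcover : ⊤ ≤ S ⊔ X := by
    rw [← Submodule.restrictScalars_top k k[G] V, ← hspan,
      restrictScalars_span_singleton_eq_span_range, Submodule.span_le]
    rintro _ ⟨g, rfl⟩
    by_cases hg : m₀ + g = m
    · obtain rfl : g = -m₀ + m := by rw [← hg, neg_add_cancel_left]
      exact Submodule.mem_sup_left (Submodule.mem_span_singleton_self _)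
    · exact Submodule.mem_sup_right ((le_iSup₂_of_le (m₀ + g) hg le_rfl :
        Vm (m₀ + g) ≤ X) (haction g m₀ v hv))
  have hdisj : X ⊓ Vm m = ⊥ := disjoint_iff.1 (hdecomp.submodule_iSupIndep m).symm
  calc Vm m ≤ (S ⊔ X) ⊓ Vm m := le_inf (le_top.trans hcover) le_rfl
    _ = S := by rw [sup_inf_assoc_of_le _ hS, hdisj, sup_bot_eq]

end GradedModule

theorem stmt_15_general (n : ℕ) (V : Type*) [AddCommGroup V] [Module ℂ V]
    [Module (AddMonoidAlgebra ℂ (Fin n → ℤ)) V]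
    [IsScalarTower ℂ (AddMonoidAlgebra ℂ (Fin n → ℤ)) V]
    [Nontrivial V]
    (Vm : (Fin n → ℤ) → Submodule ℂ V)
    (hdecomp : DirectSum.IsInternal Vm)
    (haction : ∀ p m : Fin n → ℤ, ∀ v ∈ Vm m,
      (AddMonoidAlgebra.single p (1 : ℂ)) • v ∈ Vm (m + p))
    (hirr : ∀ W : Submodule (AddMonoidAlgebra ℂ (Fin n → ℤ)) V,
      (W.restrictScalars ℂ = ⨆ m, (W.restrictScalars ℂ ⊓ Vm m)) → W = ⊥ ∨ W = ⊤) :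
    ∀ m, Module.rank ℂ (Vm m) ≤ 1 := by
  obtain ⟨m₀, hm₀⟩ := hdecomp.exists_ne_bot
  obtain ⟨v, hv, hv0⟩ := (Submodule.ne_bot_iff _).1 hm₀
  have hspan : Submodule.span ℂ[Fin n → ℤ] {v} = ⊤ :=
    (hirr _ (restrictScalars_span_singleton_eq_iSup_inf haction hv)).resolve_left
      (mt Submodule.span_singleton_eq_bot.1 hv0)
  intro m
  calc Module.rank ℂ (Vm m)
      ≤ Module.rank ℂ (ℂ ∙ single (-m₀ + m) (1 : ℂ) • v) :=
        Submodule.rank_mono (le_span_single_smul_of_span_eq_top hdecomp haction hv hspan m)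
    _ ≤ 1 := by simpa using rank_span_le (R := ℂ) {single (-m₀ + m) (1 : ℂ) • v}

/-- A ℤⁿ-graded module over the Laurent algebra `A_n = ℂ[t₁^{±1},…,t_n^{±1}]`
(modelled as `AddMonoidAlgebra ℂ (Fin n → ℤ)`) which is irreducible as a graded module
and uniformly bounded has all homogeneous components of dimension at most 1. -/
theorem stmt_15 (n : ℕ) (V : Type*) [AddCommGroup V] [Module ℂ V]
    [Module (AddMonoidAlgebra ℂ (Fin n → ℤ)) V]
    [IsScalarTower ℂ (AddMonoidAlgebra ℂ (Fin n → ℤ)) V]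
    [Nontrivial V]
    (Vm : (Fin n → ℤ) → Submodule ℂ V)
    (hdecomp : DirectSum.IsInternal Vm)
    (haction : ∀ p m : Fin n → ℤ, ∀ v ∈ Vm m,
      (AddMonoidAlgebra.single p (1 : ℂ)) • v ∈ Vm (m + p))
    (hirr : ∀ W : Submodule (AddMonoidAlgebra ℂ (Fin n → ℤ)) V,
      (W.restrictScalars ℂ = ⨆ m, (W.restrictScalars ℂ ⊓ Vm m)) → W = ⊥ ∨ W = ⊤)
    (N : ℕ) (hbound : ∀ m, Module.rank ℂ (Vm m) ≤ N) :
    ∀ m, Module.rank ℂ (Vm m) ≤ 1 :=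
  stmt_15_general n V Vm hdecomp haction hirr
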